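/- arXiv:1903.10001 — 2 statements merged into one kernel-verified Lean document; each statement's English description precedes it below -/
import Mathlib

section
/- Let (X, D) be an F-metric space with associated pair (f, α), and let d be the associated metric on X. Then X is F-complete (every F-Cauchy sequence is F-convergent) if and only if X is complete with respect to the metric d. -/
open Filter Topology

universe u v

/-- `(X, D)` is an `F`-metric space with associated pair `(f, α)`:
`f` is non-decreasing on `(0, ∞)` (F1), `f(tₙ) → -∞` iff `tₙ → 0` for positive
sequences (F2), `α ≥ 0`, `D` is nonnegative and satisfies (D1), (D2), (D3). -/
structure IsFMetric {X : Type v} (D : X → X → ℝ) (f : ℝ → ℝ) (α : ℝ) : Prop where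
  nonneg : ∀ x y : X, 0 ≤ D x y
  alpha_nonneg : 0 ≤ α
  f_mono : ∀ s t : ℝ, 0 < s → s < t → f s ≤ f t
  f_tendsto : ∀ t : ℕ → ℝ, (∀ n, 0 < t n) →
      (Tendsto t atTop (nhds 0) ↔ Tendsto (fun n => f (t n)) atTop atBot)
  eq_iff : ∀ x y : X, D x y = 0 ↔ x = y
  symm : ∀ x y : X, D x y = D y x
  ineq : ∀ x y : X, ∀ N : ℕ, 2 ≤ N → ∀ u : ℕ → X, u 0 = x → u (N - 1) = y →
      0 < D x y →
      f (D x y) ≤ f (∑ i ∈ Finset.range (N - 1), D (u i) (u (i + 1))) + α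

/-- The associated metric `d(x,y) = inf { Σ_{i<N-1} D(uᵢ, uᵢ₊₁) : N ≥ 2, u₀ = x, u_{N-1} = y }`. -/
noncomputable def assocDist {X : Type v} (D : X → X → ℝ) (x y : X) : ℝ :=
  sInf { s : ℝ | ∃ N : ℕ, 2 ≤ N ∧ ∃ u : ℕ → X, u 0 = x ∧ u (N - 1) = y ∧
    s = ∑ i ∈ Finset.range (N - 1), D (u i) (u (i + 1)) }

/-- The ball `B_ρ(x, ε) = { y : ρ(x,y) < ε }` for a distance-like function `ρ`. -/
def ballWrt {X : Type v} (ρ : X → X → ℝ) (x : X) (ε : ℝ) : Set X := { y | ρ x y < ε }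

/-- `U` is open w.r.t. `ρ`: every point of `U` has a `ρ`-ball around it inside `U`. -/
def IsOpenWrt {X : Type v} (ρ : X → X → ℝ) (U : Set X) : Prop :=
  ∀ x ∈ U, ∃ ε > 0, ballWrt ρ x ε ⊆ U

/-- `C` is closed w.r.t. `ρ`: its complement is open w.r.t. `ρ`. -/
def IsClosedWrt {X : Type v} (ρ : X → X → ℝ) (C : Set X) : Prop := IsOpenWrt ρ Cᶜ

/-- A sequence is Cauchy w.r.t. `ρ`: `ρ(xₙ, xₘ) → 0` as `n, m → ∞`. -/
def IsCauchyWrt {X : Type v} (ρ : X → X → ℝ) (x : ℕ → X) : Prop :=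
  ∀ ε > 0, ∃ N : ℕ, ∀ m, N ≤ m → ∀ n, N ≤ n → ρ (x m) (x n) < ε

/-- A sequence converges to `l` w.r.t. `ρ`: `ρ(xₙ, l) → 0` as `n → ∞`. -/
def ConvergesWrt {X : Type v} (ρ : X → X → ℝ) (x : ℕ → X) (l : X) : Prop :=
  Tendsto (fun n => ρ (x n) l) atTop (nhds 0)

/-- `X` is complete w.r.t. `ρ`: every Cauchy sequence converges. -/
def IsCompleteWrt {X : Type v} (ρ : X → X → ℝ) : Prop :=
  ∀ x : ℕ → X, IsCauchyWrt ρ x → ∃ l : X, ConvergesWrt ρ x l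

/-- The diameter of `A` w.r.t. `ρ`: `sup { ρ(x,y) : x, y ∈ A }`. -/
noncomputable def diamWrt {X : Type v} (ρ : X → X → ℝ) (A : Set X) : ℝ :=
  sSup { r : ℝ | ∃ x ∈ A, ∃ y ∈ A, r = ρ x y }

/-- `A` is bounded w.r.t. `ρ`: there is `M > 0` with `ρ(x,y) ≤ M` for all `x, y ∈ A`. -/
def IsBoundedWrt {X : Type v} (ρ : X → X → ℝ) (A : Set X) : Prop :=
  ∃ M > 0, ∀ x ∈ A, ∀ y ∈ A, ρ x y ≤ M

/-- `A` is totally bounded w.r.t. `ρ`: for every `ε > 0` finitely many `ρ`-balls of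
radius `ε` centered at points of `A` cover `A`. -/
def IsTotallyBoundedWrt {X : Type v} (ρ : X → X → ℝ) (A : Set X) : Prop :=
  ∀ ε > 0, ∃ t : Finset X, ↑t ⊆ A ∧ A ⊆ ⋃ a ∈ t, ballWrt ρ a ε

/-- `A` is compact w.r.t. `ρ`: every cover of `A` by `ρ`-open sets admits a finite subcover. -/
def IsCompactWrt {X : Type v} (ρ : X → X → ℝ) (A : Set X) : Prop :=
  ∀ 𝒰 : Set (Set X), (∀ U ∈ 𝒰, IsOpenWrt ρ U) → A ⊆ ⋃₀ 𝒰 →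
    ∃ 𝒱 ⊆ 𝒰, 𝒱.Finite ∧ A ⊆ ⋃₀ 𝒱

/-!
The associated metric satisfies `d ≤ D`, and conversely `D` is uniformly small wherever `d` is:
choose `δ > 0` with `f δ + α < f ε` (possible by (F2)); if `d(x,y) < δ` then some chain from
`x` to `y` has length `S < δ`, and `D(x,y) ≥ ε` would give
`f ε ≤ f (D(x,y)) ≤ f S + α ≤ f δ + α < f ε` by (F1) and (D3).
Hence `D` and `d` have the same Cauchy sequences and the same convergent sequences.
-/

section Comparison

variable {X : Type v} {ρ σ : X → X → ℝ} {x : ℕ → X}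

theorem IsCauchyWrt.mono (hle : ∀ a b, σ a b ≤ ρ a b) (hx : IsCauchyWrt ρ x) :
    IsCauchyWrt σ x := fun ε hε =>
  let ⟨N, hN⟩ := hx ε hε
  ⟨N, fun m hm n hn => (hle _ _).trans_lt (hN m hm n hn)⟩

theorem IsCauchyWrt.of_control
    (hctrl : ∀ ε > 0, ∃ δ > 0, ∀ a b, σ a b < δ → ρ a b < ε) (hx : IsCauchyWrt σ x) :
    IsCauchyWrt ρ x := fun ε hε =>
  let ⟨δ, hδ, hρσ⟩ := hctrl ε hε
  let ⟨N, hN⟩ := hx δ hδ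
  ⟨N, fun m hm n hn => hρσ _ _ (hN m hm n hn)⟩

theorem ConvergesWrt.mono (hσ : ∀ a b, 0 ≤ σ a b) (hle : ∀ a b, σ a b ≤ ρ a b) {l : X}
    (hx : ConvergesWrt ρ x l) : ConvergesWrt σ x l :=
  squeeze_zero (fun _ => hσ _ _) (fun _ => hle _ _) hx

theorem ConvergesWrt.of_control (hρ : ∀ a b, 0 ≤ ρ a b)
    (hctrl : ∀ ε > 0, ∃ δ > 0, ∀ a b, σ a b < δ → ρ a b < ε) {l : X}
    (hx : ConvergesWrt σ x l) : ConvergesWrt ρ x l := by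
  rw [ConvergesWrt, Metric.tendsto_atTop] at hx ⊢
  intro ε hε
  obtain ⟨δ, hδ, hρσ⟩ := hctrl ε hε
  obtain ⟨N, hN⟩ := hx δ hδ
  refine ⟨N, fun n hn => ?_⟩
  rw [Real.dist_0_eq_abs, abs_of_nonneg (hρ _ _)]
  exact hρσ _ _ ((le_abs_self _).trans_lt (Real.dist_0_eq_abs _ ▸ hN n hn))

theorem isCompleteWrt_iff_of_control (hσ : ∀ a b, 0 ≤ σ a b) (hle : ∀ a b, σ a b ≤ ρ a b)
    (hctrl : ∀ ε > 0, ∃ δ > 0, ∀ a b, σ a b < δ → ρ a b < ε) :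
    IsCompleteWrt ρ ↔ IsCompleteWrt σ := by
  have hρ : ∀ a b, 0 ≤ ρ a b := fun a b => (hσ a b).trans (hle a b)
  constructor
  · intro hcomplete x hx
    obtain ⟨l, hl⟩ := hcomplete x (hx.of_control hctrl)
    exact ⟨l, hl.mono hσ hle⟩
  · intro hcomplete x hx
    obtain ⟨l, hl⟩ := hcomplete x (hx.mono hle)
    exact ⟨l, hl.of_control hρ hctrl⟩

end Comparison

section Chains

variable {X : Type v}

def chainLengths (D : X → X → ℝ) (x y : X) : Set ℝ :=
  { s : ℝ | ∃ N : ℕ, 2 ≤ N ∧ ∃ u : ℕ → X, u 0 = x ∧ u (N - 1) = y ∧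
    s = ∑ i ∈ Finset.range (N - 1), D (u i) (u (i + 1)) }

theorem assocDist_eq_sInf_chainLengths (D : X → X → ℝ) (x y : X) :
    assocDist D x y = sInf (chainLengths D x y) := rfl

theorem self_mem_chainLengths (D : X → X → ℝ) (x y : X) : D x y ∈ chainLengths D x y :=
  ⟨2, le_rfl, fun i => if i = 0 then x else y, by simp, by simp, by simp⟩

end Chains

namespace IsFMetric

variable {X : Type v} {D : X → X → ℝ} {f : ℝ → ℝ} {α : ℝ}

theorem f_le_f (hD : IsFMetric D f α) {s t : ℝ} (hs : 0 < s) (hst : s ≤ t) : f s ≤ f t := by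
  rcases hst.eq_or_lt with rfl | hlt
  · exact le_rfl
  · exact hD.f_mono s t hs hlt

theorem exists_pos_f_lt (hD : IsFMetric D f α) (c : ℝ) : ∃ δ > 0, f δ < c := by
  have hpos : ∀ n : ℕ, (0 : ℝ) < 1 / (n + 1) := fun n => by positivity
  have hbot := (hD.f_tendsto _ hpos).mp tendsto_one_div_add_atTop_nhds_zero_nat
  obtain ⟨n, hn⟩ := (hbot.eventually (eventually_lt_atBot c)).exists
  exact ⟨_, hpos n, hn⟩

theorem chain_eq_start (hD : IsFMetric D f α) {N : ℕ} {u : ℕ → X}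
    (hzero : ∑ i ∈ Finset.range N, D (u i) (u (i + 1)) = 0) : ∀ k ≤ N, u k = u 0 := by
  rw [Finset.sum_eq_zero_iff_of_nonneg fun i _ => hD.nonneg _ _] at hzero
  intro k hk
  induction k with
  | zero => rfl
  | succ k ih =>
    rw [← ih (by omega), eq_comm, ← hD.eq_iff]
    exact hzero k (Finset.mem_range.mpr hk)

theorem nonneg_of_mem_chainLengths (hD : IsFMetric D f α) {x y : X} {s : ℝ}
    (hs : s ∈ chainLengths D x y) : 0 ≤ s := by
  obtain ⟨N, -, u, -, -, rfl⟩ := hs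
  exact Finset.sum_nonneg fun i _ => hD.nonneg _ _

theorem assocDist_nonneg (hD : IsFMetric D f α) (x y : X) : 0 ≤ assocDist D x y :=
  le_csInf ⟨_, self_mem_chainLengths D x y⟩ fun _ => hD.nonneg_of_mem_chainLengths

theorem assocDist_le (hD : IsFMetric D f α) (x y : X) : assocDist D x y ≤ D x y :=
  csInf_le ⟨0, fun _ => hD.nonneg_of_mem_chainLengths⟩ (self_mem_chainLengths D x y)

theorem exists_pos_lt_of_assocDist_lt (hD : IsFMetric D f α) {ε : ℝ} (hε : 0 < ε) :
    ∃ δ > 0, ∀ x y : X, assocDist D x y < δ → D x y < ε := by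
  obtain ⟨δ, hδ, hfδ⟩ := hD.exists_pos_f_lt (f ε - α)
  refine ⟨δ, hδ, fun x y hxy => ?_⟩
  by_contra! hεD
  have hDpos : 0 < D x y := hε.trans_le hεD
  rw [assocDist_eq_sInf_chainLengths] at hxy
  obtain ⟨S, ⟨N, hN, u, rfl, rfl, rfl⟩, hSδ⟩ :=
    exists_lt_of_csInf_lt ⟨_, self_mem_chainLengths D x y⟩ hxy
  have hSpos : 0 < ∑ i ∈ Finset.range (N - 1), D (u i) (u (i + 1)) := by
    refine (Finset.sum_nonneg fun i _ => hD.nonneg _ _).lt_of_ne fun hzero => ?_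
    rw [hD.chain_eq_start hzero.symm (N - 1) le_rfl, (hD.eq_iff _ _).mpr rfl] at hDpos
    exact hDpos.false
  linarith [hD.f_le_f hε hεD, hD.ineq _ _ N hN u rfl rfl hDpos, hD.f_le_f hSpos hSδ.le]

end IsFMetric

theorem fComplete_iff_complete_assocDist_general {X : Type v} (D : X → X → ℝ)
    (f : ℝ → ℝ) (α : ℝ) (hD : IsFMetric D f α) :
    IsCompleteWrt D ↔ IsCompleteWrt (assocDist D) :=
  isCompleteWrt_iff_of_control hD.assocDist_nonneg hD.assocDist_le
    fun _ hε => hD.exists_pos_lt_of_assocDist_lt hε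

/-- `X` is `F`-complete iff `X` is complete w.r.t. the associated metric `d`. -/
theorem fComplete_iff_complete_assocDist {X : Type v} [Nonempty X] (D : X → X → ℝ)
    (f : ℝ → ℝ) (α : ℝ) (hD : IsFMetric D f α) :
    IsCompleteWrt D ↔ IsCompleteWrt (assocDist D) :=
  fComplete_iff_complete_assocDist_general D f α hD
end

section
/- Let (X, D) be an F-metric space with associated pair (f, α), and let d be the associated metric on X. For every ε > 0 there exists δ > 0 such that for every b ∈ X, the d-ball of radius δ/2 around b is contained in the D-ball of radius ε around b: B_d(b, δ/2) ⊆ B_D(b, ε). In particular, δ may be chosen by (F2) so that f(t) < f(ε) − α for all 0 < t < δ. -/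
open Filter Topology

universe u v

/-!
By (F2), `f` tends to `-∞` at `0⁺`, so there is `δ > 0` with `f t < f ε - α` on `(0, δ)`.
If `d(b, y) < δ / 2`, some chain from `b` to `y` has `D`-length `s < δ`. When `b ≠ y` this
length is positive, and (D3) gives `f (D b y) ≤ f s + α < f ε`, whence `D b y < ε` because
`f` is non-decreasing.
-/

theorem eq_of_forall_lt_eq_succ {α : Type*} {u : ℕ → α} :
    ∀ {n : ℕ}, (∀ i < n, u i = u (i + 1)) → u 0 = u n
  | 0, _ => rfl
  | n + 1, h => (eq_of_forall_lt_eq_succ fun i hi => h i (by omega)).trans (h n n.lt_succ_self)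

theorem exists_chain_sum_lt_of_assocDist_lt {X : Type*} {D : X → X → ℝ} {x y : X} {r : ℝ}
    (h : assocDist D x y < r) :
    ∃ N : ℕ, 2 ≤ N ∧ ∃ u : ℕ → X, u 0 = x ∧ u (N - 1) = y ∧
      ∑ i ∈ Finset.range (N - 1), D (u i) (u (i + 1)) < r := by
  have two_point_chain : ∃ N : ℕ, 2 ≤ N ∧ ∃ u : ℕ → X, u 0 = x ∧ u (N - 1) = y ∧
      D x y = ∑ i ∈ Finset.range (N - 1), D (u i) (u (i + 1)) :=
    ⟨2, le_rfl, fun n => if n = 0 then x else y, rfl, rfl, by simp⟩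
  obtain ⟨s, ⟨N, hN, u, hx, hy, rfl⟩, hs⟩ :=
    exists_lt_of_csInf_lt (by exact ⟨_, two_point_chain⟩) h
  exact ⟨N, hN, u, hx, hy, hs⟩

namespace IsFMetric

variable {X : Type*} {D : X → X → ℝ} {f : ℝ → ℝ} {α : ℝ}

theorem monotoneOn (hD : IsFMetric D f α) : MonotoneOn f (Set.Ioi 0) := by
  intro s hs t _ hst
  rcases hst.eq_or_lt with rfl | hlt
  · exact le_rfl
  · exact hD.f_mono s t hs hlt

theorem exists_pos_forall_lt (hD : IsFMetric D f α) (c : ℝ) :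
    ∃ δ > 0, ∀ t : ℝ, 0 < t → t < δ → f t < c := by
  by_contra! h
  choose t ht_pos ht_lt ht_ge using fun n : ℕ => h (1 / (n + 1)) (by positivity)
  have ht_zero : Tendsto t atTop (𝓝 0) :=
    squeeze_zero (fun n => (ht_pos n).le) (fun n => (ht_lt n).le)
      tendsto_one_div_add_atTop_nhds_zero_nat
  obtain ⟨n, hn⟩ :=
    (((hD.f_tendsto t ht_pos).mp ht_zero).eventually (eventually_lt_atBot c)).exists
  exact (ht_ge n).not_gt hn

theorem chain_sum_pos (hD : IsFMetric D f α) {u : ℕ → X} {n : ℕ} (hne : u 0 ≠ u n) :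
    0 < ∑ i ∈ Finset.range n, D (u i) (u (i + 1)) := by
  have links_nonneg : ∀ i ∈ Finset.range n, 0 ≤ D (u i) (u (i + 1)) :=
    fun i _ => hD.nonneg _ _
  refine (Finset.sum_nonneg links_nonneg).lt_of_ne fun hsum => hne ?_
  have links_zero := (Finset.sum_eq_zero_iff_of_nonneg links_nonneg).mp hsum.symm
  exact eq_of_forall_lt_eq_succ fun i hi =>
    (hD.eq_iff _ _).mp (links_zero i (Finset.mem_range.mpr hi))

theorem lt_of_assocDist_lt (hD : IsFMetric D f α) {ε δ : ℝ} (hε : 0 < ε)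
    (hδ : ∀ t : ℝ, 0 < t → t < δ → f t < f ε - α) {x y : X} (hxy : assocDist D x y < δ) :
    D x y < ε := by
  rcases (hD.nonneg x y).eq_or_lt with hzero | hpos
  · rwa [← hzero]
  obtain ⟨N, hN, u, hx, hy, hsum⟩ := exists_chain_sum_lt_of_assocDist_lt hxy
  have hne : u 0 ≠ u (N - 1) := by
    rw [hx, hy]
    exact fun hxy => hpos.ne' ((hD.eq_iff x y).mpr hxy)
  have hfD : f (D x y) < f ε := by
    linarith [hD.ineq x y N hN u hx hy hpos, hδ _ (hD.chain_sum_pos hne) hsum]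
  exact hD.monotoneOn.reflect_lt hpos hε hfD

end IsFMetric

theorem ballWrt_assocDist_subset_ballWrt_general {X : Type v} (D : X → X → ℝ)
    (f : ℝ → ℝ) (α : ℝ) (hD : IsFMetric D f α) :
    ∀ ε : ℝ, 0 < ε → ∃ δ > 0,
      (∀ t : ℝ, 0 < t → t < δ → f t < f ε - α) ∧
      ∀ b : X, ballWrt (assocDist D) b (δ / 2) ⊆ ballWrt D b ε := by
  intro ε hε
  obtain ⟨δ, hδ_pos, hδ⟩ := hD.exists_pos_forall_lt (f ε - α)
  exact ⟨δ, hδ_pos, hδ, fun b y hy =>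
    hD.lt_of_assocDist_lt hε hδ (lt_trans hy (half_lt_self hδ_pos))⟩

/-- for every `ε > 0` there is `δ > 0`, chosen by (F2) so that
`f(t) < f(ε) - α` for all `0 < t < δ`, such that `B_d(b, δ/2) ⊆ B_D(b, ε)` for
every `b ∈ X`. -/
theorem ballWrt_assocDist_subset_ballWrt {X : Type v} [Nonempty X] (D : X → X → ℝ)
    (f : ℝ → ℝ) (α : ℝ) (hD : IsFMetric D f α) :
    ∀ ε : ℝ, 0 < ε → ∃ δ > 0,
      (∀ t : ℝ, 0 < t → t < δ → f t < f ε - α) ∧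
      ∀ b : X, ballWrt (assocDist D) b (δ / 2) ⊆ ballWrt D b ε :=
  ballWrt_assocDist_subset_ballWrt_general D f α hD
end
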